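/- arXiv:2211.15878 — 3 statements merged into one kernel-verified Lean document; each statement's English description precedes it below -/
import Mathlib

section
/- C₁ := D I₁ has constant coefficient 0 and x-coefficient 1; there exist unique power series g₂, h ∈ ℂ[[x]] with g₂·C₁ = D I₂ and h·C₁ = D I₃; the series C₂ := D g₂ has constant coefficient 0 and x-coefficient 1; there exists a unique power series g₃ ∈ ℂ[[x]] with g₃·C₂ = D h; and C₃ := D g₃ has constant coefficient 0 and x-coefficient 1. (Thus all divisions in the definitions of C₁, C₂, C₃ are exact in ℂ[[x]].) -/
open PowerSeries

/-- The derivation `D = x · d/dx` on `ℂ[[x]]`. -/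
noncomputable def Dop (f : PowerSeries ℂ) : PowerSeries ℂ :=
  PowerSeries.X * PowerSeries.derivative ℂ f

/-- The power series `I_j = Σ_{m≥0} (−1)^m (∏_{l=0}^{m−1} (l + j/5)^5) x^{5m+j}/(5m+j)!`,
for `1 ≤ j ≤ 3`.  (The coefficient of `x^n` is nonzero only for `n ≡ j mod 5`, in which
case `n = 5m + j` with `m = (n − j)/5`.) -/
noncomputable def Iser (j : ℕ) : PowerSeries ℂ :=
  PowerSeries.mk fun n =>
    if n % 5 = j then
      (-1 : ℂ) ^ ((n - j) / 5) *
        (∏ l ∈ Finset.range ((n - j) / 5), ((l : ℂ) + (j : ℂ) / 5) ^ 5) / (n.factorial : ℂ)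
    else 0


lemma coeff_Dop (n : ℕ) (f : PowerSeries ℂ) :
    PowerSeries.coeff n (Dop f) = n * PowerSeries.coeff n f := by
  cases n with
  | zero => simp [Dop]
  | succ m =>
    rw [Dop, PowerSeries.coeff_succ_X_mul, PowerSeries.coeff_derivative]
    push_cast; ring

lemma constCoeff_Dop (f : PowerSeries ℂ) :
    PowerSeries.constantCoeff (Dop f) = 0 := by
  have := coeff_Dop 0 f
  simpa using this

lemma coeff_mul_one (f g : PowerSeries ℂ) :
    PowerSeries.coeff 1 (f * g) =
      PowerSeries.coeff 0 f * PowerSeries.coeff 1 g +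
      PowerSeries.coeff 1 f * PowerSeries.coeff 0 g := by
  rw [PowerSeries.coeff_mul, Finset.Nat.sum_antidiagonal_eq_sum_range_succ_mk]
  simp [Finset.sum_range_succ]

lemma coeff_mul_two (f g : PowerSeries ℂ) :
    PowerSeries.coeff 2 (f * g) =
      PowerSeries.coeff 0 f * PowerSeries.coeff 2 g +
      PowerSeries.coeff 1 f * PowerSeries.coeff 1 g +
      PowerSeries.coeff 2 f * PowerSeries.coeff 0 g := by
  rw [PowerSeries.coeff_mul, Finset.Nat.sum_antidiagonal_eq_sum_range_succ_mk]
  simp [Finset.sum_range_succ]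

lemma coeff_mul_three (f g : PowerSeries ℂ) :
    PowerSeries.coeff 3 (f * g) =
      PowerSeries.coeff 0 f * PowerSeries.coeff 3 g +
      PowerSeries.coeff 1 f * PowerSeries.coeff 2 g +
      PowerSeries.coeff 2 f * PowerSeries.coeff 1 g +
      PowerSeries.coeff 3 f * PowerSeries.coeff 0 g := by
  rw [PowerSeries.coeff_mul, Finset.Nat.sum_antidiagonal_eq_sum_range_succ_mk]
  simp [Finset.sum_range_succ]

lemma coeff_Iser (n j : ℕ) (h : n % 5 ≠ j) : PowerSeries.coeff n (Iser j) = 0 := by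
  simp [Iser, h]

lemma coeff_Iser' (n j : ℕ) (h : n % 5 = j) :
    PowerSeries.coeff n (Iser j) =
      (-1 : ℂ) ^ ((n - j) / 5) *
        (∏ l ∈ Finset.range ((n - j) / 5), ((l : ℂ) + (j : ℂ) / 5) ^ 5) / (n.factorial : ℂ) := by
  simp [Iser, h]

/-- Key division lemma. -/
lemma key_div {a : PowerSeries ℂ} (ha : PowerSeries.coeff 1 a ≠ 0) (b : PowerSeries ℂ) :
    ∃! g : PowerSeries ℂ, g * Dop a = Dop b := by
  have hu : PowerSeries.constantCoeff (PowerSeries.derivative ℂ a) ≠ 0 := by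
    have : PowerSeries.coeff 0 (PowerSeries.derivative ℂ a) = PowerSeries.coeff 1 a := by
      rw [PowerSeries.coeff_derivative]; simp
    rw [← PowerSeries.coeff_zero_eq_constantCoeff, this]; exact ha
  have hane : Dop a ≠ 0 := by
    intro h0
    apply ha
    have := coeff_Dop 1 a
    rw [h0] at this
    simpa using this.symm
  refine ⟨PowerSeries.derivative ℂ b * (PowerSeries.derivative ℂ a)⁻¹, ?_, ?_⟩
  · show _ * Dop a = Dop b
    rw [Dop, Dop]
    have hc : (PowerSeries.derivative ℂ a)⁻¹ * PowerSeries.derivative ℂ a = 1 :=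
      PowerSeries.inv_mul_cancel _ hu
    calc PowerSeries.derivative ℂ b * (PowerSeries.derivative ℂ a)⁻¹ *
          (PowerSeries.X * PowerSeries.derivative ℂ a)
        = PowerSeries.X * (PowerSeries.derivative ℂ b *
            ((PowerSeries.derivative ℂ a)⁻¹ * PowerSeries.derivative ℂ a)) := by ring
      _ = PowerSeries.X * PowerSeries.derivative ℂ b := by rw [hc, mul_one]
  · intro y hy
    have h2 : PowerSeries.derivative ℂ b * (PowerSeries.derivative ℂ a)⁻¹ * Dop a = Dop b := by
      rw [Dop, Dop]
      have hc : (PowerSeries.derivative ℂ a)⁻¹ * PowerSeries.derivative ℂ a = 1 :=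
        PowerSeries.inv_mul_cancel _ hu
      calc PowerSeries.derivative ℂ b * (PowerSeries.derivative ℂ a)⁻¹ *
            (PowerSeries.X * PowerSeries.derivative ℂ a)
          = PowerSeries.X * (PowerSeries.derivative ℂ b *
              ((PowerSeries.derivative ℂ a)⁻¹ * PowerSeries.derivative ℂ a)) := by ring
        _ = PowerSeries.X * PowerSeries.derivative ℂ b := by rw [hc, mul_one]
    exact mul_right_cancel₀ hane (hy.trans h2.symm)

/-- `C₁ := D I₁` has constant coefficient 0 and `x`-coefficient 1; there exist unique power
series `g₂, h` with `g₂·C₁ = D I₂` and `h·C₁ = D I₃`; `C₂ := D g₂` has constant coefficient 0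
and `x`-coefficient 1; there exists a unique `g₃` with `g₃·C₂ = D h`; and `C₃ := D g₃` has
constant coefficient 0 and `x`-coefficient 1. -/
theorem stmt2 :
    PowerSeries.constantCoeff (Dop (Iser 1)) = 0 ∧
    PowerSeries.coeff 1 (Dop (Iser 1)) = 1 ∧
    (∃! g₂ : PowerSeries ℂ, g₂ * Dop (Iser 1) = Dop (Iser 2)) ∧
    (∃! h : PowerSeries ℂ, h * Dop (Iser 1) = Dop (Iser 3)) ∧
    ∀ g₂ h : PowerSeries ℂ,
      g₂ * Dop (Iser 1) = Dop (Iser 2) →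
      h * Dop (Iser 1) = Dop (Iser 3) →
      PowerSeries.constantCoeff (Dop g₂) = 0 ∧
      PowerSeries.coeff 1 (Dop g₂) = 1 ∧
      (∃! g₃ : PowerSeries ℂ, g₃ * Dop g₂ = Dop h) ∧
      ∀ g₃ : PowerSeries ℂ, g₃ * Dop g₂ = Dop h →
        PowerSeries.constantCoeff (Dop g₃) = 0 ∧
        PowerSeries.coeff 1 (Dop g₃) = 1 := by
  -- coefficients of Iser
  have i1_1 : PowerSeries.coeff 1 (Iser 1) = 1 := by
    rw [coeff_Iser' 1 1 rfl]; norm_num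
  have i1_0 : PowerSeries.coeff 0 (Iser 1) = 0 := coeff_Iser 0 1 (by norm_num)
  have i1_2 : PowerSeries.coeff 2 (Iser 1) = 0 := coeff_Iser 2 1 (by norm_num)
  have i2_1 : PowerSeries.coeff 1 (Iser 2) = 0 := coeff_Iser 1 2 (by norm_num)
  have i2_2 : PowerSeries.coeff 2 (Iser 2) = 1 / 2 := by
    rw [coeff_Iser' 2 2 rfl]; norm_num [Nat.factorial]
  have i3_1 : PowerSeries.coeff 1 (Iser 3) = 0 := coeff_Iser 1 3 (by norm_num)
  have i3_2 : PowerSeries.coeff 2 (Iser 3) = 0 := coeff_Iser 2 3 (by norm_num)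
  have i3_3 : PowerSeries.coeff 3 (Iser 3) = 1 / 6 := by
    rw [coeff_Iser' 3 3 rfl]; norm_num [Nat.factorial]
  -- coefficients of C₁ := Dop (Iser 1)
  have c0 : PowerSeries.coeff 0 (Dop (Iser 1)) = 0 := by rw [coeff_Dop]; simp
  have c1 : PowerSeries.coeff 1 (Dop (Iser 1)) = 1 := by rw [coeff_Dop, i1_1]; norm_num
  have c2 : PowerSeries.coeff 2 (Dop (Iser 1)) = 0 := by rw [coeff_Dop, i1_2]; ring
  have d1 : PowerSeries.coeff 1 (Dop (Iser 2)) = 0 := by rw [coeff_Dop, i2_1]; ring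
  have d2 : PowerSeries.coeff 2 (Dop (Iser 2)) = 1 := by rw [coeff_Dop, i2_2]; norm_num
  have e1 : PowerSeries.coeff 1 (Dop (Iser 3)) = 0 := by rw [coeff_Dop, i3_1]; ring
  have e2 : PowerSeries.coeff 2 (Dop (Iser 3)) = 0 := by rw [coeff_Dop, i3_2]; ring
  have e3 : PowerSeries.coeff 3 (Dop (Iser 3)) = 1 / 2 := by rw [coeff_Dop, i3_3]; norm_num
  have hI1 : PowerSeries.coeff 1 (Iser 1) ≠ 0 := by rw [i1_1]; exact one_ne_zero
  refine ⟨constCoeff_Dop _, c1, key_div hI1 _, key_div hI1 _, ?_⟩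
  intro g₂ h hg hh
  -- coefficients of g₂
  have g0 : PowerSeries.coeff 0 g₂ = 0 := by
    have := congrArg (PowerSeries.coeff 1) hg
    rw [coeff_mul_one, c0, c1, d1] at this
    simpa using this
  have g1 : PowerSeries.coeff 1 g₂ = 1 := by
    have := congrArg (PowerSeries.coeff 2) hg
    rw [coeff_mul_two, c0, c1, c2, d2, g0] at this
    simpa using this
  -- coefficients of h
  have h0 : PowerSeries.coeff 0 h = 0 := by
    have := congrArg (PowerSeries.coeff 1) hh
    rw [coeff_mul_one, c0, c1, e1] at this
    simpa using this
  have h1 : PowerSeries.coeff 1 h = 0 := by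
    have := congrArg (PowerSeries.coeff 2) hh
    rw [coeff_mul_two, c0, c1, c2, e2, h0] at this
    simpa using this
  have h2 : PowerSeries.coeff 2 h = 1 / 2 := by
    have := congrArg (PowerSeries.coeff 3) hh
    rw [coeff_mul_three, c0, c1, c2, e3, h0, h1] at this
    simpa using this
  have hg1 : PowerSeries.coeff 1 g₂ ≠ 0 := by rw [g1]; exact one_ne_zero
  have cg1 : PowerSeries.coeff 1 (Dop g₂) = 1 := by rw [coeff_Dop, g1]; norm_num
  have cg0 : PowerSeries.coeff 0 (Dop g₂) = 0 := by rw [coeff_Dop]; simp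
  have dh1 : PowerSeries.coeff 1 (Dop h) = 0 := by rw [coeff_Dop, h1]; ring
  have dh2 : PowerSeries.coeff 2 (Dop h) = 1 := by rw [coeff_Dop, h2]; norm_num
  refine ⟨constCoeff_Dop _, cg1, key_div hg1 _, ?_⟩
  intro g₃ hg3
  have t0 : PowerSeries.coeff 0 g₃ = 0 := by
    have := congrArg (PowerSeries.coeff 1) hg3
    rw [coeff_mul_one, cg0, cg1, dh1] at this
    simpa using this
  have t1 : PowerSeries.coeff 1 g₃ = 1 := by
    have := congrArg (PowerSeries.coeff 2) hg3
    rw [coeff_mul_two, cg0, cg1, dh2, t0] at this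
    simpa using this
  refine ⟨constCoeff_Dop _, ?_⟩
  rw [coeff_Dop, t1]; norm_num
end

section
/- For all i, j ∈ {0,…,4} and all k ∈ ℤ, the partial derivative of P_{i,j}^k with respect to the indeterminate A₂ equals δ_{i,2}·P_{3,j}^{k−1}; that is, ∂P_{i,j}^k/∂A₂ = 0 for i ≠ 2, and ∂P_{2,j}^k/∂A₂ = P_{3,j}^{k−1}. -/
open MvPolynomial

/-- The ring `F = ℂ[L, L⁻¹][A₁, A₁′, A₁″, A₂]`, modelled as polynomials in four variables
(`A₁ = X 0`, `A₁′ = X 1`, `A₁″ = X 2`, `A₂ = X 3`) over the ring of Laurent polynomials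
`ℂ[L, L⁻¹]` (with `L = T 1`). -/
noncomputable abbrev F : Type := MvPolynomial (Fin 4) (LaurentPolynomial ℂ)

/-- The element `L ∈ F`. -/
noncomputable def Lv : F := MvPolynomial.C (LaurentPolynomial.T 1)

/-- The element `L⁻¹ ∈ F`. -/
noncomputable def Lvinv : F := MvPolynomial.C (LaurentPolynomial.T (-1))

/-- The indeterminate `A₁`. -/
noncomputable def A1 : F := MvPolynomial.X 0

/-- The indeterminate `A₁′`. -/
noncomputable def A1' : F := MvPolynomial.X 1

/-- The indeterminate `A₁″`. -/
noncomputable def A1'' : F := MvPolynomial.X 2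

/-- The indeterminate `A₂`. -/
noncomputable def A2 : F := MvPolynomial.X 3

section Aux

variable (D : Derivation ℂ F F)

noncomputable def pd : Derivation (LaurentPolynomial ℂ) F F := MvPolynomial.pderiv (3 : Fin 4)

lemma hLL : Lv * Lvinv = 1 := by
  rw [Lv, Lvinv, ← map_mul, ← LaurentPolynomial.T_add]
  norm_num

lemma pd_algebraMap (c : ℂ) : pd (algebraMap ℂ F c) = 0 := by
  rw [IsScalarTower.algebraMap_apply ℂ (LaurentPolynomial ℂ) F, MvPolynomial.algebraMap_eq]
  exact pderiv_C

lemma pd_Lv : pd Lv = 0 := pderiv_C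
lemma pd_Lvinv : pd Lvinv = 0 := pderiv_C
lemma pd_A1 : pd A1 = 0 := pderiv_X_of_ne (by decide)
lemma pd_A1' : pd A1' = 0 := pderiv_X_of_ne (by decide)
lemma pd_A1'' : pd A1'' = 0 := pderiv_X_of_ne (by decide)
lemma pd_A2 : pd A2 = 1 := pderiv_X_self 3

lemma pd_smul (c : ℂ) (x : F) : pd (c • x) = c • pd x := by
  rw [Algebra.smul_def, Algebra.smul_def]
  rw [Derivation.leibniz, smul_eq_mul, smul_eq_mul, pd_algebraMap, mul_zero, add_zero, mul_comm]

noncomputable def Sal : Subalgebra ℂ F := Algebra.adjoin ℂ {Lv, Lvinv}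
noncomputable def Ual : Subalgebra ℂ F := Algebra.adjoin ℂ {Lv, Lvinv, A1, A1'}
noncomputable def Val : Subalgebra ℂ F := Algebra.adjoin ℂ {Lv, Lvinv, A1, A1', A1''}

lemma hSU : Sal ≤ Ual := Algebra.adjoin_mono (by intro x hx; simp_all [Set.mem_insert_iff]; tauto)
lemma hUV : Ual ≤ Val := Algebra.adjoin_mono (by intro x hx; simp_all [Set.mem_insert_iff]; tauto)

lemma pd_V : ∀ x ∈ Val, pd x = 0 := by
  intro x hx
  induction hx using Algebra.adjoin_induction with
  | mem y hy =>
    rcases hy with h | h | h | h | h <;> subst h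
    exacts [pd_Lv, pd_Lvinv, pd_A1, pd_A1', pd_A1'']
  | algebraMap r => exact pd_algebraMap r
  | add y z hy hz hy' hz' => rw [map_add, hy', hz', add_zero]
  | mul y z hy hz hy' hz' =>
    rw [Derivation.leibniz, smul_eq_mul, smul_eq_mul, hy', hz', mul_zero, mul_zero, add_zero]

variable (hDL : D Lv = Lv - (5 ^ 5 : ℂ)⁻¹ • Lv ^ 6)
variable (hDA1 : D A1 = A1') (hDA1' : D A1' = A1'')

include hDL in
lemma hDLvinv : D Lvinv = -(Lvinv * Lvinv * D Lv) := by
  have h0 := D.leibniz Lv Lvinv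
  rw [hLL, Derivation.map_one_eq_zero, smul_eq_mul, smul_eq_mul] at h0
  have h1 : Lv * D Lvinv = -(Lvinv * D Lv) := by linear_combination -h0
  calc D Lvinv = (Lv * Lvinv) * D Lvinv := by rw [hLL, one_mul]
    _ = Lvinv * (Lv * D Lvinv) := by ring
    _ = -(Lvinv * Lvinv * D Lv) := by rw [h1]; ring

include hDL in
lemma hDS : ∀ x ∈ Sal, D x ∈ Sal := by
  intro x hx
  have hLvS : Lv ∈ Sal := Algebra.subset_adjoin (by simp)
  have hLvinvS : Lvinv ∈ Sal := Algebra.subset_adjoin (by simp)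
  have hDLvS : D Lv ∈ Sal := by
    rw [hDL]; exact sub_mem hLvS (SMulMemClass.smul_mem _ (pow_mem hLvS 6))
  induction hx using Algebra.adjoin_induction with
  | mem y hy =>
    rcases hy with h | h <;> subst h
    · exact hDLvS
    · rw [hDLvinv D hDL]
      exact neg_mem (mul_mem (mul_mem hLvinvS hLvinvS) hDLvS)
  | algebraMap r => rw [Derivation.map_algebraMap]; exact zero_mem _
  | add y z hy hz hy' hz' => rw [map_add]; exact add_mem hy' hz'
  | mul y z hy hz hy' hz' =>
    rw [Derivation.leibniz, smul_eq_mul, smul_eq_mul]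
    exact add_mem (mul_mem hy hz') (mul_mem hz hy')

lemma hCS : ∀ r : LaurentPolynomial ℂ, (MvPolynomial.C r : F) ∈ Sal := by
  have hLvS : Lv ∈ Sal := Algebra.subset_adjoin (by simp)
  have hLvinvS : Lvinv ∈ Sal := Algebra.subset_adjoin (by simp)
  have hT : ∀ n : ℤ, (MvPolynomial.C (LaurentPolynomial.T n) : F) ∈ Sal := by
    intro n
    induction n using Int.induction_on with
    | zero => rw [LaurentPolynomial.T_zero, map_one]; exact one_mem _
    | succ n ih =>
      have : ((n : ℤ) + 1) = (n : ℤ) + 1 := rfl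
      rw [LaurentPolynomial.T_add, map_mul]
      exact mul_mem ih hLvS
    | pred n ih =>
      have : (-(n : ℤ) - 1) = (-(n : ℤ)) + (-1) := by ring
      rw [this, LaurentPolynomial.T_add, map_mul]
      exact mul_mem ih hLvinvS
  intro r
  induction r using LaurentPolynomial.induction_on' with
  | add p q hp hq => rw [map_add]; exact add_mem hp hq
  | C_mul_T n a =>
    rw [map_mul]
    have : (MvPolynomial.C (LaurentPolynomial.C a) : F) = algebraMap ℂ F a := by
      rw [IsScalarTower.algebraMap_apply ℂ (LaurentPolynomial ℂ) F, MvPolynomial.algebraMap_eq,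
        LaurentPolynomial.C_eq_algebraMap]
    rw [this]
    exact mul_mem (Subalgebra.algebraMap_mem _ a) (hT n)

include hDL hDA1 hDA1' in
lemma hDU : ∀ x ∈ Ual, D x ∈ Val := by
  intro x hx
  induction hx using Algebra.adjoin_induction with
  | mem y hy =>
    rcases hy with h | h | h | h <;> subst h
    · exact hUV (hSU (hDS D hDL _ (Algebra.subset_adjoin (by simp))))
    · exact hUV (hSU (hDS D hDL _ (Algebra.subset_adjoin (by simp))))
    · rw [hDA1]; exact Algebra.subset_adjoin (by simp)
    · rw [hDA1']; exact Algebra.subset_adjoin (by simp)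
  | algebraMap r => rw [Derivation.map_algebraMap]; exact zero_mem _
  | add y z hy hz hy' hz' => rw [map_add]; exact add_mem hy' hz'
  | mul y z hy hz hy' hz' =>
    rw [Derivation.leibniz, smul_eq_mul, smul_eq_mul]
    exact add_mem (mul_mem (hUV hy) hz') (mul_mem (hUV hz) hy')

end Aux

set_option maxHeartbeats 2000000 in
/-- `∂P_{i,j}^k/∂A₂ = δ_{i,2}·P_{3,j}^{k−1}`. -/
theorem stmt10
    (D : Derivation ℂ F F)
    (hDL : D Lv = Lv - (5 ^ 5 : ℂ)⁻¹ • Lv ^ 6)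
    (hDA1 : D A1 = A1')
    (hDA1' : D A1' = A1'')
    (hDA2 : D A2 = Lv * A1 ^ 2 + Lv * A2 ^ 2 - A1'
      - 15 * (1 - (5 ^ 5 : ℂ)⁻¹ • Lv ^ 5) * ((5 ^ 5 : ℂ)⁻¹ • Lv ^ 5))
    (q : Fin 5 → ℤ → LaurentPolynomial ℂ)
    (hq : ∀ (j : Fin 5) (k : ℤ), k < 0 → q j k = 0)
    (P : Fin 5 → Fin 5 → ℤ → F)
    (hPneg : ∀ (i j : Fin 5) (k : ℤ), k < 0 → P i j k = 0)
    (hP0 : ∀ (j : Fin 5) (k : ℤ), P 0 j k = MvPolynomial.C (q j k))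
    (hP4 : ∀ (j : Fin 5) (k : ℤ),
      P 4 j k = P 0 j k + Lvinv * D (P 0 j (k - 1)))
    (hP3 : ∀ (j : Fin 5) (k : ℤ),
      P 3 j k = P 4 j k + Lvinv * D (P 4 j (k - 1)) + A1 * P 4 j (k - 1))
    (hP2 : ∀ (j : Fin 5) (k : ℤ),
      P 2 j k = P 3 j k + Lvinv * D (P 3 j (k - 1)) + A2 * P 3 j (k - 1))
    (hP1 : ∀ (j : Fin 5) (k : ℤ),
      P 1 j k = P 2 j k + Lvinv * D (P 2 j (k - 1)) - A2 * P 2 j (k - 1))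
    :
    ∀ (i j : Fin 5) (k : ℤ),
      (MvPolynomial.pderiv (3 : Fin 4)) (P i j k)
        = if i = 2 then P 3 j (k - 1) else 0 := by
  have hLvS : Lv ∈ Sal := Algebra.subset_adjoin (by simp)
  have hLvinvS : Lvinv ∈ Sal := Algebra.subset_adjoin (by simp)
  have hA1U : A1 ∈ Ual := Algebra.subset_adjoin (by simp)
  have hA1'U : A1' ∈ Ual := Algebra.subset_adjoin (by simp)
  have pdS : ∀ x ∈ Sal, pd x = 0 := fun x hx => pd_V x (hUV (hSU hx))
  have pdU : ∀ x ∈ Ual, pd x = 0 := fun x hx => pd_V x (hUV hx)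
  have pdmul : ∀ x y : F, pd (x * y) = x * pd y + y * pd x := fun x y => by
    rw [Derivation.leibniz, smul_eq_mul, smul_eq_mul]
  have Dmul : ∀ x y : F, D (x * y) = x * D y + y * D x := fun x y => by
    rw [Derivation.leibniz, smul_eq_mul, smul_eq_mul]
  -- memberships
  have hM4 : ∀ (j : Fin 5) (k : ℤ), P 4 j k ∈ Sal := by
    intro j k
    rw [hP4, hP0 j k, hP0 j (k - 1)]
    exact add_mem (hCS _) (mul_mem hLvinvS (hDS D hDL _ (hCS _)))
  have hM3 : ∀ (j : Fin 5) (k : ℤ), P 3 j k ∈ Ual := by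
    intro j k
    rw [hP3]
    exact add_mem (add_mem (hSU (hM4 j k))
      (mul_mem (hSU hLvinvS) (hSU (hDS D hDL _ (hM4 j (k - 1))))))
      (mul_mem hA1U (hSU (hM4 j (k - 1))))
  have hM3D : ∀ (j : Fin 5) (k : ℤ), D (P 3 j k) ∈ Ual := by
    intro j k
    rw [hP3, map_add, map_add, Dmul, Dmul]
    have h4 : ∀ m : ℤ, D (P 4 j m) ∈ Sal := fun m => hDS D hDL _ (hM4 j m)
    have h4' : ∀ m : ℤ, D (D (P 4 j m)) ∈ Sal := fun m => hDS D hDL _ (h4 m)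
    refine add_mem (add_mem (hSU (h4 k)) (add_mem ?_ ?_)) (add_mem ?_ ?_)
    · exact hSU (mul_mem hLvinvS (h4' (k - 1)))
    · exact hSU (mul_mem (h4 (k - 1)) (hDS D hDL _ hLvinvS))
    · exact mul_mem hA1U (hSU (h4 (k - 1)))
    · rw [hDA1]; exact mul_mem (hSU (hM4 j (k - 1))) hA1'U
  -- pderiv facts
  have hpd4 : ∀ (j : Fin 5) (k : ℤ), pd (P 4 j k) = 0 := fun j k => pdS _ (hM4 j k)
  have hpd3 : ∀ (j : Fin 5) (k : ℤ), pd (P 3 j k) = 0 := fun j k => pdU _ (hM3 j k)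
  have hpdD3 : ∀ (j : Fin 5) (k : ℤ), pd (D (P 3 j k)) = 0 := fun j k => pdU _ (hM3D j k)
  have hpdDD3 : ∀ (j : Fin 5) (k : ℤ), pd (D (D (P 3 j k))) = 0 :=
    fun j k => pd_V _ (hDU D hDL hDA1 hDA1' _ (hM3D j k))
  have hpdDLvinv : pd (D Lvinv) = 0 := pdS _ (hDS D hDL _ hLvinvS)
  have hpdDA2 : pd (D A2) = 2 * Lv * A2 := by
    have hrest : pd (Lv * A1 ^ 2 - A1'
        - 15 * (1 - (5 ^ 5 : ℂ)⁻¹ • Lv ^ 5) * ((5 ^ 5 : ℂ)⁻¹ • Lv ^ 5)) = 0 := by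
      refine pd_V _ ?_
      have hLvV : Lv ∈ Val := hUV (hSU hLvS)
      have hA1V : A1 ∈ Val := hUV hA1U
      have hA1'V : A1' ∈ Val := hUV hA1'U
      refine sub_mem (sub_mem (mul_mem hLvV (pow_mem hA1V 2)) hA1'V) ?_
      have h15 : (15 : F) ∈ Val := by
        have := Subalgebra.natCast_mem Val 15
        exact_mod_cast this
      exact mul_mem (mul_mem h15 (sub_mem (one_mem _)
        (SMulMemClass.smul_mem _ (pow_mem hLvV 5)))) (SMulMemClass.smul_mem _ (pow_mem hLvV 5))
    have hsplit : D A2 = Lv * A2 ^ 2 + (Lv * A1 ^ 2 - A1'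
        - 15 * (1 - (5 ^ 5 : ℂ)⁻¹ • Lv ^ 5) * ((5 ^ 5 : ℂ)⁻¹ • Lv ^ 5)) := by
      rw [hDA2]; ring
    rw [hsplit, map_add, hrest, add_zero, pdmul, pd_Lv, mul_zero, add_zero,
      pow_two, pdmul, pd_A2]
    ring
  have hpd2 : ∀ (j : Fin 5) (k : ℤ), pd (P 2 j k) = P 3 j (k - 1) := by
    intro j k
    rw [hP2, map_add, map_add, pdmul, pdmul, hpd3, hpd3, hpdD3, pd_Lvinv, pd_A2]
    ring
  have hDP2e : ∀ (j : Fin 5) (k : ℤ),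
      D (P 2 j k) = D (P 3 j k) + (Lvinv * D (D (P 3 j (k - 1))) + D (P 3 j (k - 1)) * D Lvinv)
        + (A2 * D (P 3 j (k - 1)) + P 3 j (k - 1) * D A2) := by
    intro j k
    rw [hP2, map_add, map_add, Dmul, Dmul]
  have hpdDP2 : ∀ (j : Fin 5) (k : ℤ),
      pd (D (P 2 j k)) = 2 * Lv * A2 * P 3 j (k - 1) + D (P 3 j (k - 1)) := by
    intro j k
    simp only [hDP2e, map_add, pdmul, hpdD3, hpdDD3, hpdDLvinv, hpd3, hpdDA2, pd_Lvinv, pd_A2]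
    ring
  have hpd1 : ∀ (j : Fin 5) (k : ℤ), pd (P 1 j k) = 0 := by
    intro j k
    rw [hP1, map_sub, map_add, pdmul, pdmul, hpd2 j k, hpd2 j (k - 1), hpdDP2 j (k - 1),
      pd_Lvinv, pd_A2, hP2 j (k - 1)]
    linear_combination (2 * A2 * P 3 j (k - 1 - 1)) * hLL
  intro i j k
  by_cases h2 : i = 2
  · subst h2
    rw [if_pos rfl]
    exact hpd2 j k
  · rw [if_neg h2]
    have hi : i = 0 ∨ i = 1 ∨ i = 3 ∨ i = 4 := by omega
    rcases hi with h | h | h | h <;> subst h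
    · show pd (P 0 j k) = 0
      rw [hP0]; exact pderiv_C
    · exact hpd1 j k
    · exact hpd3 j k
    · exact hpd4 j k
end

section
/- For all i, j ∈ {0,…,4} and all k ∈ ℤ, the partial derivative of P_{i,j}^k with respect to the indeterminate A₁″ equals δ_{i,1}·L^{−2}·P_{4,j}^{k−3}; that is, ∂P_{i,j}^k/∂A₁″ = 0 for i ≠ 1, and ∂P_{1,j}^k/∂A₁″ = L^{−2}·P_{4,j}^{k−3}. -/
open MvPolynomial

lemma pd_zero_of_mem {s : Set F} (hs : ∀ x ∈ s, MvPolynomial.pderiv (2:Fin 4) x = 0)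
    {x : F} (hx : x ∈ Algebra.adjoin ℂ s) : MvPolynomial.pderiv (2:Fin 4) x = 0 := by
  induction hx using Algebra.adjoin_induction with
  | mem x hx => exact hs x hx
  | algebraMap r =>
    rw [IsScalarTower.algebraMap_apply ℂ (LaurentPolynomial ℂ) F,
      MvPolynomial.algebraMap_eq, MvPolynomial.pderiv_C]
  | add x y _ _ hx hy => rw [map_add, hx, hy, add_zero]
  | mul x y _ _ hx hy => rw [MvPolynomial.pderiv_mul, hx, hy, mul_zero, zero_mul, add_zero]

lemma D_mem_of_mem (D : Derivation ℂ F F) (S : Subalgebra ℂ F) {s : Set F}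
    (hsub : s ⊆ (S : Set F)) (hs : ∀ x ∈ s, D x ∈ S) {x : F} (hx : x ∈ Algebra.adjoin ℂ s) :
    x ∈ S ∧ D x ∈ S := by
  induction hx using Algebra.adjoin_induction with
  | mem x hx => exact ⟨hsub hx, hs x hx⟩
  | algebraMap r =>
    exact ⟨S.algebraMap_mem r, by rw [Derivation.map_algebraMap]; exact S.zero_mem⟩
  | add x y _ _ hx hy => exact ⟨add_mem hx.1 hy.1, by rw [map_add]; exact add_mem hx.2 hy.2⟩
  | mul x y _ _ hx hy =>
    refine ⟨mul_mem hx.1 hy.1, ?_⟩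
    rw [Derivation.leibniz, smul_eq_mul, smul_eq_mul]
    exact add_mem (mul_mem hx.1 hy.2) (mul_mem hy.1 hx.2)

lemma C_mem_S0 (f : LaurentPolynomial ℂ) :
    (MvPolynomial.C f : F) ∈ Algebra.adjoin ℂ ({Lv, Lvinv} : Set F) := by
  induction f using LaurentPolynomial.induction_on' with
  | add p q hp hq => rw [map_add]; exact add_mem hp hq
  | C_mul_T n a =>
    have hT : (MvPolynomial.C (LaurentPolynomial.T n : LaurentPolynomial ℂ) : F)
        ∈ Algebra.adjoin ℂ ({Lv, Lvinv} : Set F) := by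
      rcases le_or_gt 0 n with h | h
      · have hn : (LaurentPolynomial.T n : LaurentPolynomial ℂ)
            = (LaurentPolynomial.T 1) ^ n.toNat := by
          rw [LaurentPolynomial.T_pow]; congr 1; omega
        rw [hn, map_pow]
        exact pow_mem (Algebra.subset_adjoin (by left; rfl)) _
      · have hn : (LaurentPolynomial.T n : LaurentPolynomial ℂ)
            = (LaurentPolynomial.T (-1)) ^ (-n).toNat := by
          rw [LaurentPolynomial.T_pow]; congr 1; omega
        rw [hn, map_pow]
        exact pow_mem (Algebra.subset_adjoin (by right; rfl)) _
    have hCa : (MvPolynomial.C (LaurentPolynomial.C a) : F) = algebraMap ℂ F a := by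
      rw [IsScalarTower.algebraMap_apply ℂ (LaurentPolynomial ℂ) F,
        MvPolynomial.algebraMap_eq, LaurentPolynomial.C_eq_algebraMap]
    rw [map_mul, hCa]
    exact mul_mem (Subalgebra.algebraMap_mem _ a) hT

set_option maxHeartbeats 2000000 in
set_option maxHeartbeats 2000000 in
/-- `∂P_{i,j}^k/∂A₁″ = δ_{i,1}·L⁻²·P_{4,j}^{k−3}`. -/
theorem stmt11
    (D : Derivation ℂ F F)
    (hDL : D Lv = Lv - (5 ^ 5 : ℂ)⁻¹ • Lv ^ 6)
    (hDA1 : D A1 = A1')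
    (hDA1' : D A1' = A1'')
    (hDA2 : D A2 = Lv * A1 ^ 2 + Lv * A2 ^ 2 - A1'
      - 15 * (1 - (5 ^ 5 : ℂ)⁻¹ • Lv ^ 5) * ((5 ^ 5 : ℂ)⁻¹ • Lv ^ 5))
    (q : Fin 5 → ℤ → LaurentPolynomial ℂ)
    (hq : ∀ (j : Fin 5) (k : ℤ), k < 0 → q j k = 0)
    (P : Fin 5 → Fin 5 → ℤ → F)
    (hPneg : ∀ (i j : Fin 5) (k : ℤ), k < 0 → P i j k = 0)
    (hP0 : ∀ (j : Fin 5) (k : ℤ), P 0 j k = MvPolynomial.C (q j k))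
    (hP4 : ∀ (j : Fin 5) (k : ℤ),
      P 4 j k = P 0 j k + Lvinv * D (P 0 j (k - 1)))
    (hP3 : ∀ (j : Fin 5) (k : ℤ),
      P 3 j k = P 4 j k + Lvinv * D (P 4 j (k - 1)) + A1 * P 4 j (k - 1))
    (hP2 : ∀ (j : Fin 5) (k : ℤ),
      P 2 j k = P 3 j k + Lvinv * D (P 3 j (k - 1)) + A2 * P 3 j (k - 1))
    (hP1 : ∀ (j : Fin 5) (k : ℤ),
      P 1 j k = P 2 j k + Lvinv * D (P 2 j (k - 1)) - A2 * P 2 j (k - 1))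
    :
    ∀ (i j : Fin 5) (k : ℤ),
      (MvPolynomial.pderiv (2 : Fin 4)) (P i j k)
        = if i = 1 then Lvinv ^ 2 * P 4 j (k - 3) else 0 := by
  classical
  set S0 : Subalgebra ℂ F := Algebra.adjoin ℂ ({Lv, Lvinv} : Set F) with hS0def
  set S1 : Subalgebra ℂ F := Algebra.adjoin ℂ ({Lv, Lvinv, A1} : Set F) with hS1def
  set S2 : Subalgebra ℂ F := Algebra.adjoin ℂ ({Lv, Lvinv, A1, A1', A2} : Set F) with hS2def
  have hLvS0 : Lv ∈ S0 := Algebra.subset_adjoin (by left; rfl)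
  have hLvinvS0 : Lvinv ∈ S0 := Algebra.subset_adjoin (by right; rfl)
  have hS01 : S0 ≤ S1 := Algebra.adjoin_mono (by
    intro x hx
    simp only [Set.mem_insert_iff, Set.mem_singleton_iff] at hx ⊢
    tauto)
  have hS02 : S0 ≤ S2 := Algebra.adjoin_mono (by
    intro x hx
    simp only [Set.mem_insert_iff, Set.mem_singleton_iff] at hx ⊢
    tauto)
  have hS12 : S1 ≤ S2 := Algebra.adjoin_mono (by
    intro x hx
    simp only [Set.mem_insert_iff, Set.mem_singleton_iff] at hx ⊢
    tauto)
  have hA1S1 : A1 ∈ S1 := Algebra.subset_adjoin (by right; right; rfl)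
  have hLvS2 : Lv ∈ S2 := hS02 hLvS0
  have hLvinvS2 : Lvinv ∈ S2 := hS02 hLvinvS0
  have hA1S2 : A1 ∈ S2 := hS12 hA1S1
  have hA1'S2 : A1' ∈ S2 := Algebra.subset_adjoin (by right; right; right; left; rfl)
  have hA2S2 : A2 ∈ S2 := Algebra.subset_adjoin (by right; right; right; right; rfl)
  -- D of Lv and Lvinv stay in S0
  have hDLvmem : D Lv ∈ S0 := by
    rw [hDL]
    exact sub_mem hLvS0 (S0.smul_mem (pow_mem hLvS0 6) _)
  have hLL : Lv * Lvinv = 1 := by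
    rw [Lv, Lvinv, ← map_mul, ← LaurentPolynomial.T_add]
    norm_num
  have hDLvinv : D Lvinv = -(Lvinv * (Lvinv * D Lv)) := by
    have h0 : Lv * D Lvinv + Lvinv * D Lv = 0 := by
      have := D.leibniz Lv Lvinv
      rw [hLL, D.map_one_eq_zero, smul_eq_mul, smul_eq_mul] at this
      exact this.symm
    have h2 : Lvinv * (Lv * D Lvinv) = D Lvinv := by
      rw [← mul_assoc, mul_comm Lvinv Lv, hLL, one_mul]
    rw [← h2, eq_neg_iff_add_eq_zero, ← mul_add, h0, mul_zero]
  have hDLvinvmem : D Lvinv ∈ S0 := by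
    rw [hDLvinv]
    exact neg_mem (mul_mem hLvinvS0 (mul_mem hLvinvS0 hDLvmem))
  have hD0 : ∀ x ∈ S0, D x ∈ S0 := by
    intro x hx
    refine (D_mem_of_mem D S0 (fun y hy => Algebra.subset_adjoin hy) ?_ hx).2
    intro y hy
    simp only [Set.mem_insert_iff, Set.mem_singleton_iff] at hy
    rcases hy with rfl | rfl
    · exact hDLvmem
    · exact hDLvinvmem
  have hD1 : ∀ x ∈ S1, D x ∈ S2 := by
    intro x hx
    refine (D_mem_of_mem D S2 ?_ ?_ hx).2
    · intro y hy
      simp only [Set.mem_insert_iff, Set.mem_singleton_iff] at hy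
      rcases hy with rfl | rfl | rfl
      · exact hLvS2
      · exact hLvinvS2
      · exact hA1S2
    · intro y hy
      simp only [Set.mem_insert_iff, Set.mem_singleton_iff] at hy
      rcases hy with rfl | rfl | rfl
      · exact hS02 hDLvmem
      · exact hS02 hDLvinvmem
      · rw [hDA1]; exact hA1'S2
  have hDA2mem : D A2 ∈ S2 := by
    rw [hDA2]
    refine sub_mem (sub_mem (add_mem (mul_mem hLvS2 (pow_mem hA1S2 2))
      (mul_mem hLvS2 (pow_mem hA2S2 2))) hA1'S2)
      (mul_mem (mul_mem ?_ (sub_mem (one_mem _) (S2.smul_mem (pow_mem hLvS2 5) _)))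
        (S2.smul_mem (pow_mem hLvS2 5) _))
    exact Subalgebra.natCast_mem S2 15
  -- P₄ lies in S0
  have hP4S : ∀ (j : Fin 5) (k : ℤ), P 4 j k ∈ S0 := by
    intro j k
    rw [hP4, hP0, hP0]
    exact add_mem (C_mem_S0 _) (mul_mem hLvinvS0 (hD0 _ (C_mem_S0 _)))
  -- P₃ lies in S1
  have hP3S : ∀ (j : Fin 5) (k : ℤ), P 3 j k ∈ S1 := by
    intro j k
    rw [hP3]
    exact add_mem (add_mem (hS01 (hP4S j k))
      (mul_mem (hS01 hLvinvS0) (hS01 (hD0 _ (hP4S j (k - 1))))))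
      (mul_mem hA1S1 (hS01 (hP4S j (k - 1))))
  -- D P₃ decomposition
  have hDP3 : ∀ (j : Fin 5) (k : ℤ),
      ∃ s ∈ S1, D (P 3 j k) = s + A1' * P 4 j (k - 1) := by
    intro j k
    refine ⟨D (P 4 j k) + (Lvinv * D (D (P 4 j (k - 1))) + D (P 4 j (k - 1)) * D Lvinv)
      + A1 * D (P 4 j (k - 1)), ?_, ?_⟩
    · exact add_mem (add_mem (hS01 (hD0 _ (hP4S j k)))
        (add_mem (mul_mem (hS01 hLvinvS0) (hS01 (hD0 _ (hD0 _ (hP4S j (k - 1))))))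
          (mul_mem (hS01 (hD0 _ (hP4S j (k - 1)))) (hS01 hDLvinvmem))))
        (mul_mem hA1S1 (hS01 (hD0 _ (hP4S j (k - 1)))))
    · rw [hP3 j k, map_add, map_add, D.leibniz, D.leibniz, hDA1]
      simp only [smul_eq_mul]
      ring
  -- P₂ lies in S2
  have hP2S : ∀ (j : Fin 5) (k : ℤ), P 2 j k ∈ S2 := by
    intro j k
    obtain ⟨s, hsmem, hseq⟩ := hDP3 j (k - 1)
    rw [hP2, hseq]
    exact add_mem (add_mem (hS12 (hP3S j k))
      (mul_mem hLvinvS2 (add_mem (hS12 hsmem)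
        (mul_mem hA1'S2 (hS02 (hP4S j (k - 1 - 1)))))))
      (mul_mem hA2S2 (hS12 (hP3S j (k - 1))))
  -- D P₂ decomposition
  have hDP2 : ∀ (j : Fin 5) (k : ℤ),
      ∃ t ∈ S2, D (P 2 j k) = t + Lvinv * (A1'' * P 4 j (k - 2)) := by
    intro j k
    obtain ⟨s, hsmem, hseq⟩ := hDP3 j k
    obtain ⟨u, humem, hueq⟩ := hDP3 j (k - 1)
    have hkk : k - 1 - 1 = k - 2 := by ring
    rw [hkk] at hueq
    refine ⟨(s + A1' * P 4 j (k - 1))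
      + (Lvinv * (D u + A1' * D (P 4 j (k - 2))) + (u + A1' * P 4 j (k - 2)) * D Lvinv)
      + (A2 * (u + A1' * P 4 j (k - 2)) + P 3 j (k - 1) * D A2), ?_, ?_⟩
    · refine add_mem (add_mem (add_mem (hS12 hsmem)
        (mul_mem hA1'S2 (hS02 (hP4S j (k - 1))))) ?_) ?_
      · exact add_mem (mul_mem hLvinvS2 (add_mem (hD1 u humem)
          (mul_mem hA1'S2 (hS02 (hD0 _ (hP4S j (k - 2)))))))
          (mul_mem (add_mem (hS12 humem) (mul_mem hA1'S2 (hS02 (hP4S j (k - 2)))))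
            (hS02 hDLvinvmem))
      · exact add_mem (mul_mem hA2S2 (add_mem (hS12 humem)
          (mul_mem hA1'S2 (hS02 (hP4S j (k - 2))))))
          (mul_mem (hS12 (hP3S j (k - 1))) hDA2mem)
    · rw [hP2 j k, map_add, map_add, D.leibniz Lvinv, D.leibniz A2, hueq, hseq,
        map_add, D.leibniz A1', hDA1']
      simp only [smul_eq_mul]
      ring
  -- pderiv 2 kills S2
  have hgen : ∀ x ∈ ({Lv, Lvinv, A1, A1', A2} : Set F),
      MvPolynomial.pderiv (2 : Fin 4) x = 0 := by
    intro x hx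
    simp only [Set.mem_insert_iff, Set.mem_singleton_iff] at hx
    rcases hx with rfl | rfl | rfl | rfl | rfl
    · exact MvPolynomial.pderiv_C
    · exact MvPolynomial.pderiv_C
    · exact MvPolynomial.pderiv_X_of_ne (by decide)
    · exact MvPolynomial.pderiv_X_of_ne (by decide)
    · exact MvPolynomial.pderiv_X_of_ne (by decide)
  have hpdS2 : ∀ x ∈ S2, MvPolynomial.pderiv (2 : Fin 4) x = 0 :=
    fun x hx => pd_zero_of_mem hgen hx
  have hpdA1'' : MvPolynomial.pderiv (2 : Fin 4) A1'' = 1 := MvPolynomial.pderiv_X_self 2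
  -- conclude
  intro i j k
  fin_cases i
  · rw [if_neg (by decide)]
    show (MvPolynomial.pderiv (2 : Fin 4)) (P 0 j k) = 0
    rw [hP0]
    exact MvPolynomial.pderiv_C
  · rw [if_pos (by decide)]
    show (MvPolynomial.pderiv (2 : Fin 4)) (P 1 j k) = Lvinv ^ 2 * P 4 j (k - 3)
    obtain ⟨t, htmem, hteq⟩ := hDP2 j (k - 1)
    have hkk : k - 1 - 2 = k - 3 := by ring
    rw [hkk] at hteq
    have h1 : MvPolynomial.pderiv (2 : Fin 4) (P 2 j k) = 0 := hpdS2 _ (hP2S j k)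
    have h2 : MvPolynomial.pderiv (2 : Fin 4) (A2 * P 2 j (k - 1)) = 0 := by
      rw [MvPolynomial.pderiv_mul, hpdS2 _ hA2S2, hpdS2 _ (hP2S j (k - 1)), mul_zero,
        zero_mul, add_zero]
    have h3 : MvPolynomial.pderiv (2 : Fin 4)
        (Lvinv * (t + Lvinv * (A1'' * P 4 j (k - 3)))) = Lvinv ^ 2 * P 4 j (k - 3) := by
      rw [MvPolynomial.pderiv_mul, hpdS2 _ hLvinvS2, map_add, hpdS2 _ htmem,
        MvPolynomial.pderiv_mul, hpdS2 _ hLvinvS2, MvPolynomial.pderiv_mul, hpdA1'',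
        hpdS2 _ (hS02 (hP4S j (k - 3)))]
      ring
    rw [hP1 j k, hteq, map_sub, map_add, h1, h3, h2]
    ring
  · rw [if_neg (by decide)]
    show (MvPolynomial.pderiv (2 : Fin 4)) (P 2 j k) = 0
    exact hpdS2 _ (hP2S j k)
  · rw [if_neg (by decide)]
    show (MvPolynomial.pderiv (2 : Fin 4)) (P 3 j k) = 0
    exact hpdS2 _ (hS12 (hP3S j k))
  · rw [if_neg (by decide)]
    show (MvPolynomial.pderiv (2 : Fin 4)) (P 4 j k) = 0
    exact hpdS2 _ (hS02 (hP4S j k))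
end
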